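/- Let G be a finite simple graph, let z ≥ 0 be an integer, and let C₁, F₁, …, C_ℓ, F_ℓ be a z-antler-sequence for G. Then for every 1 ≤ i ≤ ℓ, the pair (C₁ ∪ ⋯ ∪ C_i, F₁ ∪ ⋯ ∪ F_i) is a z-antler in G. -/

import Mathlib

variable {V : Type*}

/-- The subgraph of `G` with edges restricted to the vertex set `S`
(kept on the same vertex type; vertices outside `S` become isolated).
Used to model the induced subgraph `G[S]` and vertex deletion `G - X = G[Xᶜ]`. -/
def graphRestrict (G : SimpleGraph V) (S : Set V) : SimpleGraph V where
  Adj u v := G.Adj u v ∧ u ∈ S ∧ v ∈ S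
  symm := ⟨fun _ _ h => ⟨h.1.symm, h.2.2, h.2.1⟩⟩
  loopless := ⟨fun v h => G.loopless.irrefl v h.1⟩

/-- `X` is a feedback vertex set of `G`: deleting `X` leaves an acyclic graph. -/
def IsFVS (G : SimpleGraph V) (X : Set V) : Prop :=
  (graphRestrict G Xᶜ).IsAcyclic

/-- The feedback vertex number of `G`: the minimum size of a feedback vertex set. -/
noncomputable def fvs (G : SimpleGraph V) : ℕ :=
  sInf {n | ∃ X : Set V, IsFVS G X ∧ X.ncard = n}

/-- `X` is a minimum feedback vertex set of `G`. -/
def IsMinFVS (G : SimpleGraph V) (X : Set V) : Prop :=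
  IsFVS G X ∧ ∀ Y : Set V, IsFVS G Y → X.ncard ≤ Y.ncard

/-- `(C, F)` is a feedback vertex cut in `G`: `C` and `F` are disjoint, `G[F]` is a
forest, and every tree of `G[F]` has at most one edge to `V(G) \ (C ∪ F)` (i.e. any two
edges from the same component of `G[F]` to the outside coincide). -/
def IsFVC (G : SimpleGraph V) (C F : Set V) : Prop :=
  Disjoint C F ∧ (graphRestrict G F).IsAcyclic ∧
    ∀ u₁ u₂ w₁ w₂ : V, u₁ ∈ F → u₂ ∈ F →
      (graphRestrict G F).Reachable u₁ u₂ →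
      w₁ ∉ C ∪ F → w₂ ∉ C ∪ F → G.Adj u₁ w₁ → G.Adj u₂ w₂ →
      u₁ = u₂ ∧ w₁ = w₂

/-- `(C, F)` is an antler in `G`: a feedback vertex cut with `|C| ≤ fvs(G[C ∪ F])`. -/
def IsAntler (G : SimpleGraph V) (C F : Set V) : Prop :=
  IsFVC G C F ∧ C.ncard ≤ fvs (graphRestrict G (C ∪ F))

/-- A graph `H` together with a vertex set `C` "has order `z`" if every connected
component `H'` of `H` satisfies `fvs(H') = |C ∩ V(H')| ≤ z`. -/
def HasCertOrder {W : Type*} (H : SimpleGraph W) (C : Set W) (z : ℕ) : Prop :=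
  ∀ v : W,
    fvs (graphRestrict H {u | H.Reachable u v}) = (C ∩ {u | H.Reachable u v}).ncard ∧
    (C ∩ {u | H.Reachable u v}).ncard ≤ z

/-- `H` is a `C`-certificate in `G`: a subgraph of `G` for which `C` is a minimum
feedback vertex set. -/
def IsCCertificate (G : SimpleGraph V) (C : Set V) (H : G.Subgraph) : Prop :=
  C ⊆ H.verts ∧ IsMinFVS H.coe {u : H.verts | (u : V) ∈ C}

/-- `H` is a `C`-certificate of order `z` in `G`. -/
def IsCCertificateOfOrder (G : SimpleGraph V) (C : Set V) (H : G.Subgraph) (z : ℕ) : Prop :=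
  IsCCertificate G C H ∧ HasCertOrder H.coe {u : H.verts | (u : V) ∈ C} z

/-- `(C, F)` is a `z`-antler in `G`: an antler such that `G[C ∪ F]` contains a
`C`-certificate of order `z`. -/
def IsZAntler (G : SimpleGraph V) (z : ℕ) (C F : Set V) : Prop :=
  IsAntler G C F ∧ ∃ H : G.Subgraph, H.verts ⊆ C ∪ F ∧ IsCCertificateOfOrder G C H z

/-- The function `f_r(x) = 2x³ + 3x² - x`. -/
def fr (x : ℕ) : ℕ := 2 * x ^ 3 + 3 * x ^ 2 - x

/-- A feedback vertex cut `(C, F)` is reducible if `|F| > f_r(|C|)`. -/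
def IsReducibleFVC (G : SimpleGraph V) (C F : Set V) : Prop :=
  IsFVC G C F ∧ fr C.ncard < F.ncard

/-- A feedback vertex cut `(C, F)` is simple if `|F| ≤ 2 f_r(|C|)` and either
`G[F]` is connected, or all trees of `G[F]` have a common neighbor `v` and there is a
single-tree feedback vertex cut `(C, F₂)` with `v ∈ F₂ \ F` and `F ⊆ F₂`. -/
def IsSimpleFVC (G : SimpleGraph V) (C F : Set V) : Prop :=
  IsFVC G C F ∧ F.ncard ≤ 2 * fr C.ncard ∧
    ((G.induce F).Connected ∨
      ∃ v : V,
        (∀ u ∈ F, ∃ u' ∈ F, (graphRestrict G F).Reachable u u' ∧ G.Adj u' v) ∧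
        ∃ F₂ : Set V, IsFVC G C F₂ ∧ (G.induce F₂).Connected ∧ v ∈ F₂ \ F ∧ F ⊆ F₂)

/-- `G` contains a `v`-flower of order `k`: `k` cycles whose vertex sets pairwise
intersect exactly in `{v}`. -/
def HasFlower (G : SimpleGraph V) (v : V) (k : ℕ) : Prop :=
  ∃ c : Fin k → G.Walk v v,
    (∀ i, (c i).IsCycle) ∧
    ∀ i j, i ≠ j → {x | x ∈ (c i).support} ∩ {x | x ∈ (c j).support} = {v}

/-- `G` contains `k` pairwise vertex-disjoint cycles. -/
def HasDisjointCycles (G : SimpleGraph V) (k : ℕ) : Prop :=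
  ∃ (b : Fin k → V) (c : ∀ i, G.Walk (b i) (b i)),
    (∀ i, (c i).IsCycle) ∧
    ∀ i j, i ≠ j → Disjoint {x | x ∈ (c i).support} {x | x ∈ (c j).support}

/-- `(C, F)` is a 1-antler in `G` (self-contained definition): `G[F]` is a forest,
every tree of `G[F]` has at most one edge to `V(G) \ (C ∪ F)`, and `G[C ∪ F]`
contains `|C|` pairwise vertex-disjoint cycles. -/
def IsOneAntler (G : SimpleGraph V) (C F : Set V) : Prop :=
  IsFVC G C F ∧ HasDisjointCycles (graphRestrict G (C ∪ F)) C.ncard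

/-- `C 1, F 1, …, C ℓ, F ℓ` is a `z`-antler-sequence for `G`: the sets are pairwise
disjoint and each `(C i, F i)` is a `z`-antler in `G` minus all earlier sets. -/
def IsAntlerSeq (G : SimpleGraph V) (z ℓ : ℕ) (C F : Fin ℓ → Set V) : Prop :=
  (∀ i j, i ≠ j → Disjoint (C i) (C j)) ∧
  (∀ i j, i ≠ j → Disjoint (F i) (F j)) ∧
  (∀ i j, Disjoint (C i) (F j)) ∧
  ∀ i, IsZAntler (graphRestrict G (⋃ j, ⋃ (_ : j < i), (C j ∪ F j))ᶜ) z (C i) (F i)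

/-!
Two consecutive antlers merge. Let `(C₁, F₁)` be a `z`-antler in `G` and `(C₂, F₂)` one in
`G - (C₁ ∪ F₁)`. Every tree of `G[F₁]` has at most one edge leaving `C₁ ∪ F₁`, so a trail of
`G[F₁ ∪ F₂]` that enters such a tree from `F₂` must leave it by the same edge. Hence
`G[F₁ ∪ F₂]` is a forest, two vertices of `F₂` joined in it are already joined in `G[F₂]`, and
`(C₁ ∪ C₂, F₁ ∪ F₂)` is a feedback vertex cut of `G`. The two certificates live on disjoint
vertex sets, so their union is a `(C₁ ∪ C₂)`-certificate of order `z`: minimum feedback vertex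
sets and components of a disjoint union are read off the two parts. A `C`-certificate inside
`G[C ∪ F]` gives `|C| = fvs(certificate) ≤ fvs(G[C ∪ F])`, so the pair is a `z`-antler, and
induction along the sequence gives the theorem.
-/

open SimpleGraph

namespace SimpleGraph

variable {W : Type*}

lemma Walk.support_subset_of_adj_mem {G : SimpleGraph V} {s : Set V}
    (hs : ∀ ⦃x y⦄, G.Adj x y → x ∈ s) {u v : V} (p : G.Walk u v) (hu : u ∈ s) :
    ∀ x ∈ p.support, x ∈ s := by
  induction p with
  | nil => simpa using hu
  | cons h q ih =>
    simp only [Walk.support_cons, List.mem_cons, forall_eq_or_imp]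
    exact ⟨hu, ih (hs h.symm)⟩

lemma isAcyclic_of_isAcyclic_induce {G : SimpleGraph V} {s : Set V}
    (hs : ∀ ⦃x y⦄, G.Adj x y → x ∈ s) (h : (G.induce s).IsAcyclic) : G.IsAcyclic := by
  intro v c hc
  have hw := c.support_subset_of_adj_mem hs (hs (c.adj_snd hc.not_nil))
  have hinj := (Embedding.induce (G := G) s).injective
  refine h (c.induce s hw) ((Walk.isCycle_map_iff_of_injective (f := (Embedding.induce s).toHom)
    hinj).1 ?_)
  rwa [Walk.map_induce]

lemma reachable_induce_of_reachable {G : SimpleGraph V} {s : Set V}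
    (hs : ∀ ⦃x y⦄, G.Adj x y → x ∈ s) {u v : V} (hu : u ∈ s) (hv : v ∈ s)
    (h : G.Reachable u v) : (G.induce s).Reachable ⟨u, hu⟩ ⟨v, hv⟩ := by
  obtain ⟨p⟩ := h
  exact ⟨p.induce s (p.support_subset_of_adj_mem hs hu)⟩

variable (f : W ↪ V) (B : SimpleGraph W)

lemma mem_range_of_map_adj ⦃x y : V⦄ (h : (B.map f).Adj x y) : x ∈ Set.range f := by
  obtain ⟨a, b, -, rfl, -⟩ := (map_adj f B x y).1 h
  exact ⟨a, rfl⟩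

lemma isAcyclic_map_iff : (B.map f).IsAcyclic ↔ B.IsAcyclic :=
  ⟨IsAcyclic.of_map f, fun h => isAcyclic_of_isAcyclic_induce (mem_range_of_map_adj f B)
    ((Embedding.map f B).isoInduceRange.isAcyclic_iff.1 h)⟩

lemma reachable_map_iff {a b : W} : (B.map f).Reachable (f a) (f b) ↔ B.Reachable a b := by
  refine ⟨fun h => ?_, fun h => h.map (Embedding.map f B).toHom⟩
  have := reachable_induce_of_reachable (mem_range_of_map_adj f B) ⟨a, rfl⟩ ⟨b, rfl⟩ h
  exact (Embedding.map f B).isoInduceRange.reachable_iff.1 this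

end SimpleGraph

section FeedbackVertexSets

variable {W : Type*}

lemma isFVS_univ (A : SimpleGraph V) : IsFVS A Set.univ :=
  IsAcyclic.anti (G' := ⊥) (fun _ _ h => h.2.1 trivial) isAcyclic_bot

lemma fvs_le_ncard {A : SimpleGraph V} {X : Set V} (hX : IsFVS A X) : fvs A ≤ X.ncard :=
  Nat.sInf_le (show X.ncard ∈ {n | ∃ X, IsFVS A X ∧ X.ncard = n} from ⟨X, hX, rfl⟩)

lemma exists_isFVS_ncard_eq_fvs (A : SimpleGraph V) : ∃ X, IsFVS A X ∧ X.ncard = fvs A :=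
  Nat.sInf_mem (s := {n | ∃ X, IsFVS A X ∧ X.ncard = n}) ⟨_, Set.univ, isFVS_univ A, rfl⟩

lemma isMinFVS_iff {A : SimpleGraph V} {X : Set V} :
    IsMinFVS A X ↔ IsFVS A X ∧ X.ncard = fvs A := by
  refine ⟨fun h => ⟨h.1, le_antisymm ?_ (fvs_le_ncard h.1)⟩,
    fun h => ⟨h.1, fun Y hY => h.2 ▸ fvs_le_ncard hY⟩⟩
  obtain ⟨Y, hY, hcard⟩ := exists_isFVS_ncard_eq_fvs A
  exact hcard ▸ h.2 Y hY

lemma graphRestrict_mono {A B : SimpleGraph V} (h : A ≤ B) {S T : Set V} (hST : S ⊆ T) :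
    graphRestrict A S ≤ graphRestrict B T :=
  fun _ _ hab => ⟨h hab.1, hST hab.2.1, hST hab.2.2⟩

lemma IsFVS.anti {A B : SimpleGraph V} (h : A ≤ B) {X : Set V} (hX : IsFVS B X) : IsFVS A X :=
  IsAcyclic.anti (graphRestrict_mono h le_rfl) hX

lemma fvs_mono {A B : SimpleGraph V} (h : A ≤ B) : fvs A ≤ fvs B := by
  obtain ⟨X, hX, hcard⟩ := exists_isFVS_ncard_eq_fvs B
  exact hcard ▸ fvs_le_ncard (hX.anti h)

lemma fvs_eq_zero_of_isAcyclic {A : SimpleGraph V} (hA : A.IsAcyclic) : fvs A = 0 := by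
  simpa using fvs_le_ncard (X := ∅) (IsAcyclic.anti (fun _ _ h => h.1) hA)

lemma fvs_graphRestrict_singleton (A : SimpleGraph V) (v : V) :
    fvs (graphRestrict A {v}) = 0 :=
  fvs_eq_zero_of_isAcyclic <| IsAcyclic.anti (G' := ⊥)
    (fun _ _ ⟨h, hx, hy⟩ => h.ne (hx.trans hy.symm)) isAcyclic_bot

variable (f : W ↪ V) (B : SimpleGraph W)

lemma graphRestrict_map (X : Set V) :
    graphRestrict (B.map f) X = (graphRestrict B (f ⁻¹' X)).map f := by
  ext x y
  simp only [graphRestrict, map_adj, Set.mem_preimage]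
  constructor
  · rintro ⟨⟨a, b, hab, rfl, rfl⟩, hx, hy⟩
    exact ⟨a, b, ⟨hab, hx, hy⟩, rfl, rfl⟩
  · rintro ⟨a, b, ⟨hab, hx, hy⟩, rfl, rfl⟩
    exact ⟨⟨a, b, hab, rfl, rfl⟩, hx, hy⟩

lemma isFVS_map_iff {X : Set V} : IsFVS (B.map f) X ↔ IsFVS B (f ⁻¹' X) := by
  rw [IsFVS, graphRestrict_map, isAcyclic_map_iff, Set.preimage_compl, IsFVS]

lemma fvs_map [Finite V] : fvs (B.map f) = fvs B := by
  apply le_antisymm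
  · obtain ⟨Y, hY, hcard⟩ := exists_isFVS_ncard_eq_fvs B
    have hfY : IsFVS (B.map f) (f '' Y) := by
      rwa [isFVS_map_iff, Set.preimage_image_eq _ f.injective]
    exact (fvs_le_ncard hfY).trans_eq ((Set.ncard_image_of_injective Y f.injective).trans hcard)
  · obtain ⟨X, hX, hcard⟩ := exists_isFVS_ncard_eq_fvs (B.map f)
    calc fvs B ≤ (f ⁻¹' X).ncard := fvs_le_ncard ((isFVS_map_iff f B).1 hX)
      _ = (X ∩ Set.range f).ncard := by
        rw [← Set.preimage_inter_range,
          Set.ncard_preimage_of_injective_subset_range f.injective Set.inter_subset_right]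
      _ ≤ X.ncard := Set.ncard_le_ncard Set.inter_subset_left
      _ = fvs (B.map f) := hcard

lemma isMinFVS_map_iff [Finite V] {X : Set V} (hX : X ⊆ Set.range f) :
    IsMinFVS (B.map f) X ↔ IsMinFVS B (f ⁻¹' X) := by
  rw [isMinFVS_iff, isMinFVS_iff, isFVS_map_iff, fvs_map,
    Set.ncard_preimage_of_injective_subset_range f.injective hX]

lemma mem_range_of_reachable_map {x : V} {b : W} (h : (B.map f).Reachable x (f b)) :
    x ∈ Set.range f := by
  obtain ⟨p⟩ := h.symm
  exact p.support_subset_of_adj_mem (mem_range_of_map_adj f B) ⟨b, rfl⟩ x p.end_mem_support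

lemma eq_of_reachable_map_of_notMem_range {x v : V} (h : (B.map f).Reachable x v)
    (hv : v ∉ Set.range f) : x = v := by
  obtain ⟨p⟩ := h.symm
  cases p with
  | nil => rfl
  | cons h _ => exact (hv (mem_range_of_map_adj f B h)).elim

lemma setOf_reachable_map (b : W) :
    {x | (B.map f).Reachable x (f b)} = f '' {y | B.Reachable y b} := by
  ext x
  constructor
  · intro hx
    obtain ⟨a, rfl⟩ := mem_range_of_reachable_map f B hx
    exact ⟨a, (reachable_map_iff f B).1 hx, rfl⟩
  · rintro ⟨a, ha, rfl⟩
    exact (reachable_map_iff f B).2 ha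

lemma hasCertOrder_map_iff [Finite V] {X : Set V} (hX : X ⊆ Set.range f) (z : ℕ) :
    HasCertOrder (B.map f) X z ↔ HasCertOrder B (f ⁻¹' X) z := by
  have key : ∀ b, fvs (graphRestrict (B.map f) {x | (B.map f).Reachable x (f b)}) =
        fvs (graphRestrict B {y | B.Reachable y b}) ∧
      (X ∩ {x | (B.map f).Reachable x (f b)}).ncard = (f ⁻¹' X ∩ {y | B.Reachable y b}).ncard := by
    intro b
    rw [setOf_reachable_map, graphRestrict_map, fvs_map, Set.preimage_image_eq _ f.injective,
      ← Set.image_preimage_inter, Set.ncard_image_of_injective _ f.injective]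
    exact ⟨rfl, rfl⟩
  refine ⟨fun h b => (key b).1 ▸ (key b).2 ▸ h (f b), fun h v => ?_⟩
  by_cases hv : v ∈ Set.range f
  · obtain ⟨b, rfl⟩ := hv
    exact (key b).1 ▸ (key b).2 ▸ h b
  · have hcomp : {x | (B.map f).Reachable x v} = {v} :=
      Set.eq_singleton_iff_unique_mem.2
        ⟨Reachable.refl v, fun x hx => eq_of_reachable_map_of_notMem_range f B hx hv⟩
    have hXv : X ∩ {v} = ∅ := Set.inter_singleton_eq_empty.2 fun h => hv (hX h)
    simp [hcomp, hXv, fvs_graphRestrict_singleton]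

end FeedbackVertexSets

section Separated

variable {A B : SimpleGraph V} {S : Set V}

lemma graphRestrict_le (X : Set V) : graphRestrict A X ≤ A := fun _ _ h => h.1

lemma graphRestrict_sup (X : Set V) :
    graphRestrict (A ⊔ B) X = graphRestrict A X ⊔ graphRestrict B X := by
  ext x y
  simp only [graphRestrict, sup_adj]
  tauto

lemma SimpleGraph.Walk.edges_subset_edgeSet_of_le_sup {U : SimpleGraph V} (hU : U ≤ A ⊔ B)
    (hA : A.support ⊆ S) (hB : B.support ⊆ Sᶜ) {u v : V} (p : U.Walk u v) (hu : u ∈ S) :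
    ∀ e ∈ p.edges, e ∈ A.edgeSet := by
  induction p with
  | nil => simp
  | cons h q ih =>
    have hAdj := (hU h).resolve_right fun hb => hB ⟨_, hb⟩ hu
    simp only [Walk.edges_cons, List.mem_cons, forall_eq_or_imp]
    exact ⟨hAdj, ih (hA ⟨_, hAdj.symm⟩)⟩

lemma reachable_sup_iff_left (hA : A.support ⊆ S) (hB : B.support ⊆ Sᶜ) {u v : V}
    (hu : u ∈ S) : (A ⊔ B).Reachable u v ↔ A.Reachable u v :=
  ⟨fun ⟨p⟩ => ⟨p.transfer A (Walk.edges_subset_edgeSet_of_le_sup le_rfl hA hB p hu)⟩,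
    fun h => h.mono le_sup_left⟩

lemma isAcyclic_sup_of_support_subset (hA : A.support ⊆ S) (hB : B.support ⊆ Sᶜ)
    (hAc : A.IsAcyclic) (hBc : B.IsAcyclic) : (A ⊔ B).IsAcyclic := by
  intro v c hc
  by_cases hv : v ∈ S
  · exact hAc _ (hc.transfer (Walk.edges_subset_edgeSet_of_le_sup le_rfl hA hB c hv))
  · rw [← compl_compl S] at hA
    exact hBc _ (hc.transfer (Walk.edges_subset_edgeSet_of_le_sup (sup_comm A B).le hB hA c hv))

lemma graphRestrict_sup_of_subset (hB : B.support ⊆ Sᶜ) {T : Set V} (hT : T ⊆ S) :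
    graphRestrict (A ⊔ B) T = graphRestrict A T := by
  ext x y
  refine ⟨fun ⟨h, hx, hy⟩ => ⟨h.resolve_right fun hb => hB ⟨y, hb⟩ (hT hx), hx, hy⟩,
    fun ⟨h, hx, hy⟩ => ⟨Or.inl h, hx, hy⟩⟩

lemma IsFVS.inter_of_support_subset (hA : A.support ⊆ S) {Y : Set V} (hY : IsFVS A Y) :
    IsFVS A (Y ∩ S) := by
  refine IsAcyclic.anti (G' := graphRestrict A Yᶜ)
    (fun x y h => ⟨h.1, fun hx => ?_, fun hy => ?_⟩) hY
  · exact h.2.1 ⟨hx, hA ⟨y, h.1⟩⟩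
  · exact h.2.2 ⟨hy, hA ⟨x, h.1.symm⟩⟩

lemma IsMinFVS.sup [Finite V] {CA CB : Set V} (hA : A.support ⊆ S) (hB : B.support ⊆ Sᶜ)
    (hCA : IsMinFVS A CA) (hCB : IsMinFVS B CB) : IsMinFVS (A ⊔ B) (CA ∪ CB) := by
  refine ⟨?_, fun Y hY => ?_⟩
  · have hle : graphRestrict (A ⊔ B) (CA ∪ CB)ᶜ ≤ graphRestrict A CAᶜ ⊔ graphRestrict B CBᶜ := by
      rw [graphRestrict_sup]
      exact sup_le_sup (graphRestrict_mono le_rfl (by simp)) (graphRestrict_mono le_rfl (by simp))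
    exact IsAcyclic.anti hle (isAcyclic_sup_of_support_subset
      ((support_mono (graphRestrict_le _)).trans hA) ((support_mono (graphRestrict_le _)).trans hB)
      hCA.1 hCB.1)
  · calc (CA ∪ CB).ncard ≤ CA.ncard + CB.ncard := Set.ncard_union_le CA CB
      _ ≤ (Y ∩ S).ncard + (Y ∩ Sᶜ).ncard := add_le_add
          (hCA.2 _ ((hY.anti le_sup_left).inter_of_support_subset hA))
          (hCB.2 _ ((hY.anti le_sup_right).inter_of_support_subset hB))
      _ = Y.ncard := Set.ncard_inter_add_ncard_sdiff_eq_ncard Y S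

lemma setOf_reachable_subset (hA : A.support ⊆ S) {v : V} (hv : v ∈ S) :
    {u | A.Reachable u v} ⊆ S := fun u ⟨p⟩ =>
  p.reverse.support_subset_of_adj_mem (fun _ y h => hA ⟨y, h⟩) hv u p.reverse.end_mem_support

lemma setOf_reachable_sup_left (hA : A.support ⊆ S) (hB : B.support ⊆ Sᶜ) {v : V}
    (hv : v ∈ S) : {u | (A ⊔ B).Reachable u v} = {u | A.Reachable u v} := by
  ext u
  simp only [Set.mem_ofPred_eq, reachable_comm (u := u), reachable_sup_iff_left hA hB hv]

lemma hasCertOrder_sup_of_mem {CA CB : Set V} {z : ℕ} (hA : A.support ⊆ S) (hB : B.support ⊆ Sᶜ)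
    (hCB : CB ⊆ Sᶜ) (h : HasCertOrder A CA z) {v : V} (hv : v ∈ S) :
    fvs (graphRestrict (A ⊔ B) {u | (A ⊔ B).Reachable u v}) =
        ((CA ∪ CB) ∩ {u | (A ⊔ B).Reachable u v}).ncard ∧
      ((CA ∪ CB) ∩ {u | (A ⊔ B).Reachable u v}).ncard ≤ z := by
  have hcomp := setOf_reachable_subset hA hv
  have hCB' : CB ∩ {u | A.Reachable u v} = ∅ :=
    Set.disjoint_iff_inter_eq_empty.1 ((disjoint_compl_left (a := S)).mono hCB hcomp)
  rw [setOf_reachable_sup_left hA hB hv, graphRestrict_sup_of_subset hB hcomp,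
    Set.union_inter_distrib_right, hCB', Set.union_empty]
  exact h v

lemma HasCertOrder.sup {CA CB : Set V} {z : ℕ} (hA : A.support ⊆ S) (hB : B.support ⊆ Sᶜ)
    (hCA : CA ⊆ S) (hCB : CB ⊆ Sᶜ) (h₁ : HasCertOrder A CA z) (h₂ : HasCertOrder B CB z) :
    HasCertOrder (A ⊔ B) (CA ∪ CB) z := by
  intro v
  by_cases hv : v ∈ S
  · exact hasCertOrder_sup_of_mem hA hB hCB h₁ hv
  · rw [← compl_compl S] at hA hCA
    rw [sup_comm, Set.union_comm]
    exact hasCertOrder_sup_of_mem hB hA hCA h₂ hv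

end Separated

section Certificates

variable {G : SimpleGraph V} {C : Set V} {z : ℕ}

lemma SimpleGraph.Subgraph.support_spanningCoe_subset (K : G.Subgraph) :
    K.spanningCoe.support ⊆ K.verts :=
  fun _ ⟨_, h⟩ => K.edge_vert h

lemma isCCertificate_iff [Finite V] {K : G.Subgraph} :
    IsCCertificate G C K ↔ C ⊆ K.verts ∧ IsMinFVS K.spanningCoe C := by
  refine and_congr_right fun hC => ?_
  rw [← K.spanningCoe_coe, SimpleGraph.spanningCoe,
    isMinFVS_map_iff _ _ (by simpa using hC)]
  rfl

lemma isCCertificateOfOrder_iff [Finite V] {K : G.Subgraph} :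
    IsCCertificateOfOrder G C K z ↔ IsCCertificate G C K ∧ HasCertOrder K.spanningCoe C z := by
  refine and_congr_right fun hC => ?_
  rw [← K.spanningCoe_coe, SimpleGraph.spanningCoe,
    hasCertOrder_map_iff _ _ (by simpa using hC.1)]
  rfl

lemma IsCCertificateOfOrder.sup [Finite V] {C₁ C₂ : Set V} {K₁ K₂ : G.Subgraph}
    (hd : Disjoint K₁.verts K₂.verts) (h₁ : IsCCertificateOfOrder G C₁ K₁ z)
    (h₂ : IsCCertificateOfOrder G C₂ K₂ z) : IsCCertificateOfOrder G (C₁ ∪ C₂) (K₁ ⊔ K₂) z := by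
  rw [isCCertificateOfOrder_iff, isCCertificate_iff] at h₁ h₂ ⊢
  obtain ⟨⟨hC₁, hmin₁⟩, hord₁⟩ := h₁
  obtain ⟨⟨hC₂, hmin₂⟩, hord₂⟩ := h₂
  have hspan : (K₁ ⊔ K₂).spanningCoe = K₁.spanningCoe ⊔ K₂.spanningCoe := by
    ext; simp
  have hA := K₁.support_spanningCoe_subset
  have hB := K₂.support_spanningCoe_subset.trans hd.subset_compl_left
  rw [hspan, Subgraph.verts_sup]
  exact ⟨⟨Set.union_subset_union hC₁ hC₂, hmin₁.sup hA hB hmin₂⟩,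
    hord₁.sup hA hB hC₁ (hC₂.trans hd.subset_compl_left) hord₂⟩

def SimpleGraph.Subgraph.liftLE {G' : SimpleGraph V} (h : G' ≤ G) (K : G'.Subgraph) :
    G.Subgraph where
  verts := K.verts
  Adj := K.Adj
  adj_sub hab := h (K.adj_sub hab)
  edge_vert := K.edge_vert
  symm := K.symm

lemma IsCCertificateOfOrder.liftLE {G' : SimpleGraph V} (h : G' ≤ G) {K : G'.Subgraph}
    (hK : IsCCertificateOfOrder G' C K z) : IsCCertificateOfOrder G C (K.liftLE h) z :=
  hK

lemma IsCCertificate.ncard_le_fvs [Finite V] {K : G.Subgraph} {S : Set V} (hK : K.verts ⊆ S)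
    (h : IsCCertificate G C K) : C.ncard ≤ fvs (graphRestrict G S) := by
  rw [isCCertificate_iff, isMinFVS_iff] at h
  exact h.2.2 ▸ fvs_mono fun x y hxy =>
    ⟨K.adj_sub hxy, hK (K.edge_vert hxy), hK (K.edge_vert hxy.symm)⟩

lemma IsFVC.isZAntler [Finite V] {F : Set V} {K : G.Subgraph} (hFVC : IsFVC G C F)
    (hK : K.verts ⊆ C ∪ F) (h : IsCCertificateOfOrder G C K z) : IsZAntler G z C F :=
  ⟨⟨hFVC, h.1.ncard_le_fvs hK⟩, K, hK, h⟩

end Certificates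

section FeedbackVertexCuts

variable {G : SimpleGraph V}

lemma SimpleGraph.Walk.IsTrail.exists_boundary_darts {u v x : V} {p : G.Walk u v}
    (hp : p.IsTrail) {S : Set V} (hu : u ∉ S) (hv : v ∉ S) (hx : x ∈ p.support) (hxS : x ∈ S) :
    ∃ d₁ d₂ : G.Dart, d₁.edge ≠ d₂.edge ∧
      d₁.fst ∈ S ∧ d₁.snd ∉ S ∧ d₂.fst ∈ S ∧ d₂.snd ∉ S := by
  classical
  obtain ⟨d₁, hd₁, h₁⟩ := (p.takeUntil x hx).reverse.exists_boundary_dart S hxS hu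
  obtain ⟨d₂, hd₂, h₂⟩ := (p.dropUntil x hx).exists_boundary_dart S hxS hv
  have he₁ : d₁.edge ∈ (p.takeUntil x hx).edges := by
    rw [← List.mem_reverse, ← Walk.edges_reverse]
    exact List.mem_map_of_mem hd₁
  have he₂ : d₂.edge ∈ (p.dropUntil x hx).edges := List.mem_map_of_mem hd₂
  rw [← p.take_spec hx, Walk.isTrail_append] at hp
  exact ⟨d₁, d₂, fun h => hp.2.2 he₁ (h ▸ he₂), h₁.1, h₁.2, h₂.1, h₂.2⟩

lemma graphRestrict_graphRestrict_of_subset {S T : Set V} (h : T ⊆ S) :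
    graphRestrict (graphRestrict G S) T = graphRestrict G T := by
  ext u v
  exact ⟨fun ⟨⟨huv, _, _⟩, hu, hv⟩ => ⟨huv, hu, hv⟩,
    fun ⟨huv, hu, hv⟩ => ⟨⟨huv, h hu, h hv⟩, hu, hv⟩⟩

lemma SimpleGraph.Walk.support_subset_graphRestrict {S : Set V} {u v : V}
    (p : (graphRestrict G S).Walk u v) (hu : u ∈ S) : ∀ x ∈ p.support, x ∈ S :=
  p.support_subset_of_adj_mem (G := graphRestrict G S) (fun _ _ h => h.2.1) hu

lemma mem_of_reachable_graphRestrict {S : Set V} {u v : V}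
    (h : (graphRestrict G S).Reachable u v) (hu : u ∈ S) : v ∈ S :=
  let ⟨p⟩ := h
  p.support_subset_graphRestrict hu v p.end_mem_support

lemma SimpleGraph.Walk.edges_subset_graphRestrict {S T : Set V} {u v : V}
    (p : (graphRestrict G S).Walk u v) (hT : ∀ x ∈ p.support, x ∈ T) :
    ∀ e ∈ p.edges, e ∈ (graphRestrict G T).edgeSet := by
  intro e he
  induction e using Sym2.ind with
  | h x y =>
    exact ⟨(p.adj_of_mem_edges he).1, hT x (p.fst_mem_support_of_mem_edges he),
      hT y (p.snd_mem_support_of_mem_edges he)⟩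

variable {C₁ F₁ C₂ F₂ : Set V}

lemma mem_of_adj_of_not_reachable {x a b : V} (hx : x ∈ F₁)
    (ha : (graphRestrict G F₁).Reachable x a) (hb : ¬ (graphRestrict G F₁).Reachable x b)
    (hab : (graphRestrict G (F₁ ∪ F₂)).Adj a b) : b ∈ F₂ :=
  hab.2.2.resolve_left fun hb₁ =>
    hb (ha.trans (Adj.reachable ⟨hab.1, mem_of_reachable_graphRestrict ha hx, hb₁⟩))

/-- A trail entering a tree of `G[F₁]` from `F₂` would have to leave it along a second edge to
`F₂`, but the tree has only one edge out of `C₁ ∪ F₁`. -/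
lemma IsFVC.notMem_of_isTrail (h₁ : IsFVC G C₁ F₁) (hF₂ : Disjoint F₂ (C₁ ∪ F₁)) {u v : V}
    {p : (graphRestrict G (F₁ ∪ F₂)).Walk u v} (hp : p.IsTrail) (hu : u ∉ F₁) (hv : v ∉ F₁) :
    ∀ x ∈ p.support, x ∉ F₁ := by
  intro x hx hxF
  have hT : {y | (graphRestrict G F₁).Reachable x y} ⊆ F₁ :=
    fun y hy => mem_of_reachable_graphRestrict hy hxF
  obtain ⟨d₁, d₂, hne, h₁a, h₁b, h₂a, h₂b⟩ :=
    hp.exists_boundary_darts (fun h => hu (hT h)) (fun h => hv (hT h)) hx (Reachable.refl x)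
  have hw₁ := mem_of_adj_of_not_reachable hxF h₁a h₁b d₁.adj
  have hw₂ := mem_of_adj_of_not_reachable hxF h₂a h₂b d₂.adj
  obtain ⟨hfst, hsnd⟩ := h₁.2.2 d₁.fst d₂.fst d₁.snd d₂.snd (hT h₁a) (hT h₂a) (h₁a.symm.trans h₂a)
    (Set.disjoint_left.1 hF₂ hw₁) (Set.disjoint_left.1 hF₂ hw₂) d₁.adj.1 d₂.adj.1
  exact hne (congrArg Dart.edge (Dart.ext _ _ (Prod.ext hfst hsnd)))

lemma IsFVC.isAcyclic_union (h₁ : IsFVC G C₁ F₁) (hF₂ : Disjoint F₂ (C₁ ∪ F₁))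
    (hac₂ : (graphRestrict G F₂).IsAcyclic) : (graphRestrict G (F₁ ∪ F₂)).IsAcyclic := by
  classical
  intro v c hc
  have hv : v ∈ F₁ ∪ F₂ := (c.adj_snd hc.not_nil).2.1
  by_cases hall : ∀ x ∈ c.support, x ∈ F₁
  · exact h₁.2.1 _ (hc.transfer (c.edges_subset_graphRestrict hall))
  push Not at hall
  obtain ⟨y, hy, hyF⟩ := hall
  have hc' := hc.rotate hy
  have hout := h₁.notMem_of_isTrail hF₂ hc'.isTrail hyF hyF
  have hin : ∀ x ∈ (c.rotate y hy).support, x ∈ F₂ := fun x hx =>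
    ((c.rotate y hy).support_subset_graphRestrict (c.support_subset_graphRestrict hv y hy) x
      hx).resolve_left (hout x hx)
  exact hac₂ _ (hc'.transfer ((c.rotate y hy).edges_subset_graphRestrict hin))

/-- The edge `uw` is the only edge of the tree of `u` out of `C₁ ∪ F₁`, so the tree has no edge
to `F₂` and is a whole component of `G[F₁ ∪ F₂]`. -/
lemma IsFVC.reachable_of_adj (h₁ : IsFVC G C₁ F₁) (hF₂ : Disjoint F₂ (C₁ ∪ F₁)) {u u' w : V}
    (hu : u ∈ F₁) (hr : (graphRestrict G (F₁ ∪ F₂)).Reachable u u') (hw₁ : w ∉ C₁ ∪ F₁)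
    (hw₂ : w ∉ F₂) (huw : G.Adj u w) : (graphRestrict G F₁).Reachable u u' := by
  classical
  by_contra hnr
  obtain ⟨p⟩ := hr
  obtain ⟨d, -, hd₁, hd₂⟩ :=
    p.exists_boundary_dart {y | (graphRestrict G F₁).Reachable u y} (Reachable.refl u) hnr
  have hd := mem_of_adj_of_not_reachable hu hd₁ hd₂ d.adj
  obtain ⟨-, rfl⟩ := h₁.2.2 u d.fst w d.snd hu (mem_of_reachable_graphRestrict hd₁ hu) hd₁ hw₁
    (Set.disjoint_left.1 hF₂ hd) huw d.adj.1
  exact hw₂ hd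

lemma IsFVC.union (h₁ : IsFVC G C₁ F₁) (h₂ : IsFVC (graphRestrict G (C₁ ∪ F₁)ᶜ) C₂ F₂)
    (hd : Disjoint (C₁ ∪ F₁) (C₂ ∪ F₂)) : IsFVC G (C₁ ∪ C₂) (F₁ ∪ F₂) := by
  have hF₂ : Disjoint F₂ (C₁ ∪ F₁) := hd.symm.mono_left Set.subset_union_right
  have hrestrict := graphRestrict_graphRestrict_of_subset (G := G) hF₂.subset_compl_right
  refine ⟨?_, h₁.isAcyclic_union hF₂ (hrestrict ▸ h₂.2.1), ?_⟩
  · simp only [Set.disjoint_union_left, Set.disjoint_union_right]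
    exact ⟨⟨h₁.1, hd.symm.mono Set.subset_union_left Set.subset_union_right⟩,
      hd.mono Set.subset_union_left Set.subset_union_right, h₂.1⟩
  intro u₁ u₂ w₁ w₂ hu₁ hu₂ hr hw₁ hw₂ ha₁ ha₂
  simp only [Set.mem_union, not_or] at hw₁ hw₂
  have hw₁' : w₁ ∉ C₁ ∪ F₁ := by simp [hw₁]
  have hw₂' : w₂ ∉ C₁ ∪ F₁ := by simp [hw₂]
  by_cases hF₁ : u₁ ∈ F₁ ∨ u₂ ∈ F₁
  · have hr₁ : (graphRestrict G F₁).Reachable u₁ u₂ := hF₁.elim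
      (fun h => h₁.reachable_of_adj hF₂ h hr hw₁' hw₁.2.2 ha₁)
      (fun h => (h₁.reachable_of_adj hF₂ h hr.symm hw₂' hw₂.2.2 ha₂).symm)
    have hu₁F : u₁ ∈ F₁ := hF₁.elim id (mem_of_reachable_graphRestrict hr₁.symm)
    exact h₁.2.2 u₁ u₂ w₁ w₂ hu₁F (mem_of_reachable_graphRestrict hr₁ hu₁F) hr₁ hw₁' hw₂' ha₁ ha₂
  push Not at hF₁
  have hu₁F₂ := hu₁.resolve_left hF₁.1
  have hu₂F₂ := hu₂.resolve_left hF₁.2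
  obtain ⟨p, hp⟩ := hr.exists_isPath
  have hout := h₁.notMem_of_isTrail hF₂ hp.isTrail hF₁.1 hF₁.2
  have hin : ∀ x ∈ p.support, x ∈ F₂ := fun x hx =>
    (p.support_subset_graphRestrict hu₁ x hx).resolve_left (hout x hx)
  refine h₂.2.2 u₁ u₂ w₁ w₂ hu₁F₂ hu₂F₂
    (hrestrict ▸ ⟨p.transfer _ (p.edges_subset_graphRestrict hin)⟩) (by simp [hw₁]) (by simp [hw₂])
    ⟨ha₁, Set.disjoint_left.1 hF₂ hu₁F₂, hw₁'⟩
    ⟨ha₂, Set.disjoint_left.1 hF₂ hu₂F₂, hw₂'⟩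

end FeedbackVertexCuts

section AntlerSequences

variable {G : SimpleGraph V} {z : ℕ}

theorem IsZAntler.union [Finite V] {C₁ F₁ C₂ F₂ : Set V} (h₁ : IsZAntler G z C₁ F₁)
    (h₂ : IsZAntler (graphRestrict G (C₁ ∪ F₁)ᶜ) z C₂ F₂) (hd : Disjoint (C₁ ∪ F₁) (C₂ ∪ F₂)) :
    IsZAntler G z (C₁ ∪ C₂) (F₁ ∪ F₂) := by
  obtain ⟨⟨hFVC₁, -⟩, K₁, hK₁, hcert₁⟩ := h₁
  obtain ⟨⟨hFVC₂, -⟩, K₂, hK₂, hcert₂⟩ := h₂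
  refine (hFVC₁.union hFVC₂ hd).isZAntler (K := K₁ ⊔ K₂.liftLE (graphRestrict_le _)) ?_
    (hcert₁.sup (hd.mono hK₁ hK₂) (hcert₂.liftLE _))
  rw [Subgraph.verts_sup, Set.union_union_union_comm]
  exact Set.union_subset_union hK₁ hK₂

lemma isZAntler_empty [Finite V] (G : SimpleGraph V) (z : ℕ) : IsZAntler G z ∅ ∅ := by
  have hFVC : IsFVC G ∅ ∅ :=
    ⟨Set.disjoint_empty _, IsAcyclic.anti (G' := ⊥) (fun _ _ h => h.2.1.elim) isAcyclic_bot,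
      fun _ _ _ _ h => h.elim⟩
  refine hFVC.isZAntler (K := ⊥) (by simp) ?_
  rw [isCCertificateOfOrder_iff, isCCertificate_iff, Subgraph.spanningCoe_bot]
  refine ⟨⟨Set.empty_subset _, IsAcyclic.anti (graphRestrict_le _) isAcyclic_bot, by simp⟩,
    fun v => ?_⟩
  simp [fvs_eq_zero_of_isAcyclic (IsAcyclic.anti (graphRestrict_le _) isAcyclic_bot)]

variable {ℓ : ℕ} {C F : Fin ℓ → Set V}

lemma Fin.iUnion_val_lt_succ {n : ℕ} (hn : n < ℓ) (s : Fin ℓ → Set V) :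
    ⋃ (j : Fin ℓ) (_ : (j : ℕ) < n + 1), s j =
      (⋃ (j : Fin ℓ) (_ : (j : ℕ) < n), s j) ∪ s ⟨n, hn⟩ := by
  ext x
  simp only [Set.mem_iUnion, Set.mem_union, exists_prop, Nat.lt_succ_iff_lt_or_eq, or_and_right,
    exists_or]
  refine or_congr Iff.rfl ⟨fun ⟨j, hj, hx⟩ => ?_, fun hx => ⟨⟨n, hn⟩, rfl, hx⟩⟩
  obtain rfl : j = ⟨n, hn⟩ := Fin.ext hj
  exact hx

lemma IsAntlerSeq.disjoint (h : IsAntlerSeq G z ℓ C F) {j k : Fin ℓ} (hjk : j ≠ k) :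
    Disjoint (C j ∪ F j) (C k ∪ F k) := by
  simp only [Set.disjoint_union_left, Set.disjoint_union_right]
  exact ⟨⟨h.1 j k hjk, (h.2.2.1 k j).symm⟩, h.2.2.1 j k, h.2.1 j k hjk⟩

lemma IsAntlerSeq.isZAntler_iUnion_lt [Finite V] (h : IsAntlerSeq G z ℓ C F) :
    ∀ n ≤ ℓ, IsZAntler G z (⋃ (j : Fin ℓ) (_ : (j : ℕ) < n), C j)
      (⋃ (j : Fin ℓ) (_ : (j : ℕ) < n), F j) := by
  intro n hn
  induction n with
  | zero => simpa using isZAntler_empty G z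
  | succ n ih =>
    have hlt : n < ℓ := hn
    have hstep := h.2.2.2 ⟨n, hlt⟩
    simp only [Set.iUnion_union_distrib] at hstep
    rw [Fin.iUnion_val_lt_succ hlt, Fin.iUnion_val_lt_succ hlt]
    refine (ih hlt.le).union hstep ?_
    simp only [← Set.iUnion_union_distrib]
    exact Set.disjoint_iUnion₂_left.2 fun j hj => h.disjoint (Fin.ne_of_lt hj)

end AntlerSequences

theorem stmt14 [Fintype V] (G : SimpleGraph V) (z ℓ : ℕ) (C F : Fin ℓ → Set V)
    (h : IsAntlerSeq G z ℓ C F) (i : Fin ℓ) :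
    IsZAntler G z (⋃ j, ⋃ (_ : j ≤ i), C j) (⋃ j, ⋃ (_ : j ≤ i), F j) := by
  have h' := h.isZAntler_iUnion_lt (i + 1) i.isLt
  simp only [Nat.lt_succ_iff] at h'
  exact h'
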